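/- arXiv:2112.09122 — 2 statements merged into one kernel-verified Lean document; each statement's English description precedes it below -/
import Mathlib

section
/- Fix integers n ≥ 1 and even m ≥ 2, set N = m·n, let g_A, g_B be the permutations of ℤ/Nℤ defined in the context, and let f(g) = x_A·d(g,g_A) + x_B·d(g,g_B) + d(g,e). (i) If x_A ≥ 0, x_B ≥ 0 and x_A + x_B < 1, then f(g) > f(e) for every permutation g ≠ e; in particular the identity e is the unique minimizer of f, with f(e) = (x_A + x_B)·n·(m−1). (ii) If x_A > 0, x_B > 0 and x_A + x_B = 1, then f(g) ≥ n·(m−1) for all g ∈ S_N, with equality exactly when g ∈ Γ(g_A,e) ∩ Γ(g_B,e). -/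
noncomputable def cycleCount {α : Type*} (g : Equiv.Perm α) : ℕ :=
  Nat.card (Quotient (Setoid.mk g.SameCycle
    ⟨fun x => Equiv.Perm.SameCycle.refl g x,
     fun h => h.symm,
     fun h₁ h₂ => h₁.trans h₂⟩))

/-- The Cayley distance `d(g,h) = N - #(g h⁻¹)` on the permutations of a finite set. -/
noncomputable def cayley {α : Type*} (g h : Equiv.Perm α) : ℕ :=
  Nat.card α - cycleCount (g * h⁻¹)

/-- `Γ(g,h)`: the set of permutations on the Cayley geodesic between `g` and `h`. -/
def geodesic {α : Type*} (g h : Equiv.Perm α) : Set (Equiv.Perm α) :=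
  {k | cayley g k + cayley k h = cayley g h}

/-!
The Cayley length `N - #(g)` of a permutation `g` of a finite set `α` is the rank of the
linear map `f ↦ f ∘ g - f` on `α → ℚ`: its kernel is the space of functions constant on the
cycles of `g`. Since `f ∘ (a b) - f = (f ∘ a - f) ∘ b + (f ∘ b - f)`, rank subadditivity gives
the triangle inequality for the Cayley distance. With `ε_k(g) = d(g,k) + d(g,e) - d(k,e) ≥ 0`,
vanishing exactly on `Γ(k,e)`, one has the identity
`f(g) = f(e) + x_A ε_{g_A}(g) + x_B ε_{g_B}(g) + (1 - x_A - x_B) d(g,e)`,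
from which both parts follow once `d(g_A,e) = d(g_B,e) = N - n`, i.e. once `g_B` (and its
conjugate `g_A`) has exactly `n` cycles.
-/

open Equiv Equiv.Perm

namespace Equiv.Perm

variable {α : Type*}

lemma cycleCount_eq_card_quotient (g : Perm α) :
    cycleCount g = Nat.card (Quotient (SameCycle.setoid g)) := rfl

lemma cycleCount_inv (g : Perm α) : cycleCount g⁻¹ = cycleCount g :=
  Nat.card_congr (Quotient.congr (Equiv.refl α) fun _ _ => sameCycle_inv)

lemma cycleCount_conj (σ g : Perm α) : cycleCount (σ * g * σ⁻¹) = cycleCount g :=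
  Nat.card_congr (Quotient.congr σ.symm fun _ _ => sameCycle_conj)

lemma cycleCount_eq_card_of_sameCycle_iff {β : Type*} {g : Perm α} (f : α → β)
    (hf : Function.Surjective f) (h : ∀ x y, g.SameCycle x y ↔ f x = f y) :
    cycleCount g = Nat.card β :=
  Nat.card_congr <|
    (Quotient.congr (Equiv.refl α) fun x y => (h x y).trans Setoid.ker_def.symm).trans
      (Setoid.quotientKerEquivOfSurjective f hf)

lemma cycleCount_one : cycleCount (1 : Perm α) = Nat.card α :=
  cycleCount_eq_card_of_sameCycle_iff id Function.surjective_id fun _ _ => sameCycle_one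

noncomputable def compSubId (g : Perm α) : (α → ℚ) →ₗ[ℚ] (α → ℚ) :=
  LinearMap.funLeft ℚ ℚ g - LinearMap.id

lemma compSubId_mul (a b : Perm α) :
    compSubId (a * b) = LinearMap.funLeft ℚ ℚ b ∘ₗ compSubId a + compSubId b := by
  ext f x
  simp [compSubId, LinearMap.funLeft_apply]

lemma comp_pow_eq_of_comp_eq {β : Type*} {g : Perm α} {f : α → β} (hf : f ∘ g = f) (k : ℕ) :
    f ∘ ⇑(g ^ k) = f := by
  induction k with
  | zero => rfl
  | succ k ih => rw [pow_succ, coe_mul, ← Function.comp_assoc, ih, hf]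

lemma compSubId_ne_zero {g : Perm α} (hg : g ≠ 1) : compSubId g ≠ 0 := by
  classical
  obtain ⟨x, hx⟩ : ∃ x, g x ≠ x := by
    by_contra! h
    exact hg (Equiv.ext h)
  intro h0
  have := congrFun (LinearMap.congr_fun h0 (Pi.single (g x) 1)) x
  simp [compSubId, LinearMap.funLeft_apply, hx.symm] at this

variable [Finite α]

lemma ker_compSubId (g : Perm α) :
    LinearMap.ker (compSubId g) =
      LinearMap.range (LinearMap.funLeft ℚ ℚ (Quotient.mk (SameCycle.setoid g))) := by
  ext f
  simp only [LinearMap.mem_ker, LinearMap.mem_range, compSubId, LinearMap.sub_apply, sub_eq_zero]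
  constructor
  · intro hf
    refine ⟨Quotient.lift f fun x y hxy => ?_, rfl⟩
    obtain ⟨k, -, rfl⟩ := hxy.exists_pow_eq'
    exact (congrFun (comp_pow_eq_of_comp_eq hf k) x).symm
  · rintro ⟨F, rfl⟩
    ext x
    exact congrArg F (Quotient.sound (sameCycle_apply_right.2 (SameCycle.refl g x)).symm)

lemma cycleCount_eq_finrank_ker (g : Perm α) :
    cycleCount g = Module.finrank ℚ (LinearMap.ker (compSubId g)) := by
  have := Fintype.ofFinite α
  have := Fintype.ofFinite (Quotient (SameCycle.setoid g))
  rw [ker_compSubId, LinearMap.finrank_range_of_inj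
    (LinearMap.funLeft_injective_of_surjective _ _ _ Quotient.mk_surjective),
    Module.finrank_fintype_fun_eq_card, cycleCount_eq_card_quotient, Nat.card_eq_fintype_card]

lemma cycleCount_add_finrank_range (g : Perm α) :
    cycleCount g + Module.finrank ℚ (LinearMap.range (compSubId g)) = Nat.card α := by
  have := Fintype.ofFinite α
  rw [cycleCount_eq_finrank_ker, add_comm, LinearMap.finrank_range_add_finrank_ker,
    Module.finrank_fintype_fun_eq_card, Nat.card_eq_fintype_card]

lemma finrank_range_compSubId_mul_le (a b : Perm α) :
    Module.finrank ℚ (LinearMap.range (compSubId (a * b))) ≤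
      Module.finrank ℚ (LinearMap.range (compSubId a)) +
        Module.finrank ℚ (LinearMap.range (compSubId b)) := by
  have h : (compSubId (a * b)).rank ≤ (compSubId a).rank + (compSubId b).rank := by
    rw [compSubId_mul]
    calc _ ≤ (LinearMap.funLeft ℚ ℚ b ∘ₗ compSubId a).rank + (compSubId b).rank :=
          LinearMap.rank_add_le _ _
      _ ≤ _ := by gcongr; exact LinearMap.rank_comp_le_right _ _
  rw [LinearMap.rank, LinearMap.rank, LinearMap.rank, ← Module.finrank_eq_rank,
    ← Module.finrank_eq_rank, ← Module.finrank_eq_rank] at h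
  exact_mod_cast h

end Equiv.Perm

namespace ZMod

variable {m n : ℕ}

lemma val_natCast_mul_add {q r : ℕ} (hq : q < n) (hr : r < m) :
    ((q * m + r : ℕ) : ZMod (m * n)).val = q * m + r :=
  ZMod.val_cast_of_lt (by nlinarith)

lemma eq_of_natCast_mul_add_eq {q q' r r' : ℕ} (hq : q < n) (hq' : q' < n) (hr : r < m)
    (hr' : r' < m) (h : ((q * m + r : ℕ) : ZMod (m * n)) = ((q' * m + r' : ℕ) : ZMod (m * n))) :
    q = q' := by
  have hval := congrArg ZMod.val h
  rw [val_natCast_mul_add hq hr, val_natCast_mul_add hq' hr'] at hval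
  have hm : 0 < m := by omega
  have hdiv := congrArg (· / m) hval
  simp only [Nat.mul_comm _ m, Nat.mul_add_div hm, Nat.div_eq_of_lt hr, Nat.div_eq_of_lt hr',
    add_zero] at hdiv
  exact hdiv

lemma exists_eq_natCast_mul_add [NeZero (m * n)] (x : ZMod (m * n)) :
    ∃ q < n, ∃ r < m, x = ((q * m + r : ℕ) : ZMod (m * n)) := by
  have hm : 0 < m := Nat.pos_of_ne_zero (left_ne_zero_of_mul (NeZero.ne (m * n)))
  exact ⟨x.val / m, Nat.div_lt_of_lt_mul x.val_lt, x.val % m, Nat.mod_lt _ hm,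
    by rw [Nat.div_add_mod', ZMod.natCast_zmod_val]⟩

end ZMod

section BlockCycles

variable {m n : ℕ} {g : Perm (ZMod (m * n))}

def IsBlockRotation (g : Perm (ZMod (m * n))) : Prop :=
  ∀ q r : ℕ, r < m →
    g ((q * m + r : ℕ) : ZMod (m * n)) = ((q * m + (r + 1) % m : ℕ) : ZMod (m * n))

lemma IsBlockRotation.pow_apply_natCast_mul_add (hg : IsBlockRotation g)
    (k q : ℕ) {r : ℕ} (hr : r < m) :
    (g ^ k) ((q * m + r : ℕ) : ZMod (m * n)) = ((q * m + (r + k) % m : ℕ) : ZMod (m * n)) := by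
  induction k with
  | zero => rw [pow_zero, one_apply, Nat.add_zero, Nat.mod_eq_of_lt hr]
  | succ k ih =>
    rw [pow_succ', mul_apply, ih, hg q _ (Nat.mod_lt _ (by omega)), Nat.mod_add_mod,
      Nat.add_assoc]

lemma IsBlockRotation.sameCycle_natCast_mul_add_iff [NeZero (m * n)] (hg : IsBlockRotation g)
    {q q' r r' : ℕ} (hq : q < n) (hq' : q' < n) (hr : r < m) (hr' : r' < m) :
    g.SameCycle ((q * m + r : ℕ) : ZMod (m * n)) ((q' * m + r' : ℕ) : ZMod (m * n)) ↔
      q = q' := by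
  have hm : 0 < m := by omega
  constructor
  · intro h
    obtain ⟨k, -, hk⟩ := h.exists_pow_eq'
    rw [hg.pow_apply_natCast_mul_add k q hr] at hk
    exact ZMod.eq_of_natCast_mul_add_eq hq hq' (Nat.mod_lt _ hm) hr' hk
  · rintro rfl
    have from_base : ∀ {s}, s < m →
        g.SameCycle ((q * m + 0 : ℕ) : ZMod (m * n)) ((q * m + s : ℕ) : ZMod (m * n)) :=
      fun {s} hs => ⟨s, by rw [zpow_natCast, hg.pow_apply_natCast_mul_add s q hm,
        Nat.zero_add, Nat.mod_eq_of_lt hs]⟩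
    exact (from_base hr).symm.trans (from_base hr')

lemma IsBlockRotation.cycleCount_eq [NeZero (m * n)] (hg : IsBlockRotation g) :
    cycleCount g = n := by
  choose block hblock rem hrem hx using ZMod.exists_eq_natCast_mul_add (m := m) (n := n)
  have hm : 0 < m := (Nat.zero_le _).trans_lt (hrem 0)
  rw [cycleCount_eq_card_of_sameCycle_iff (fun x => (⟨block x, hblock x⟩ : Fin n)), Nat.card_fin]
  · intro q
    refine ⟨((q * m + 0 : ℕ) : ZMod (m * n)), Fin.ext ?_⟩
    exact (ZMod.eq_of_natCast_mul_add_eq q.isLt (hblock _) hm (hrem _) (hx _)).symm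
  · intro x y
    rw [Fin.mk.injEq,
      ← hg.sameCycle_natCast_mul_add_iff (hblock x) (hblock y) (hrem x) (hrem y), ← hx, ← hx]

end BlockCycles

section Cayley

variable {α : Type*}

lemma cayley_comm (g h : Perm α) : cayley g h = cayley h g := by
  rw [cayley, cayley, ← cycleCount_inv, mul_inv_rev, inv_inv]

lemma cayley_self (g : Perm α) : cayley g g = 0 := by
  rw [cayley, mul_inv_cancel, cycleCount_one, Nat.sub_self]

lemma cayley_one_left (g : Perm α) : cayley 1 g = Nat.card α - cycleCount g := by
  rw [cayley, one_mul, cycleCount_inv]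

noncomputable def geodesicExcess (k g : Perm α) : ℝ :=
  cayley g k + cayley g 1 - cayley k 1

lemma geodesicExcess_eq_zero_iff (k g : Perm α) :
    geodesicExcess k g = 0 ↔ g ∈ geodesic k 1 := by
  rw [geodesicExcess, sub_eq_zero, cayley_comm g k]
  exact_mod_cast Iff.rfl

variable [Finite α]

lemma cayley_eq_finrank_range (g h : Perm α) :
    cayley g h = Module.finrank ℚ (LinearMap.range (compSubId (g * h⁻¹))) := by
  rw [cayley, ← cycleCount_add_finrank_range, Nat.add_sub_cancel_left]

lemma cayley_triangle (g k h : Perm α) : cayley g h ≤ cayley g k + cayley k h := by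
  rw [cayley_eq_finrank_range, cayley_eq_finrank_range, cayley_eq_finrank_range,
    show g * h⁻¹ = g * k⁻¹ * (k * h⁻¹) by group]
  exact finrank_range_compSubId_mul_le _ _

lemma cayley_pos {g h : Perm α} (hgh : g ≠ h) : 0 < cayley g h := by
  rw [cayley_eq_finrank_range, Nat.pos_iff_ne_zero, Ne, Submodule.finrank_eq_zero,
    LinearMap.range_eq_bot]
  exact compSubId_ne_zero (mul_inv_eq_one.not.2 hgh)

lemma geodesicExcess_nonneg (k g : Perm α) : 0 ≤ geodesicExcess k g := by
  rw [geodesicExcess, sub_nonneg, cayley_comm g k]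
  exact_mod_cast cayley_triangle k g 1

end Cayley

section WeightedCost

variable {α : Type*}

/-- The function `f` of the theorem. -/
noncomputable def weightedCost (xA xB : ℝ) (a b g : Perm α) : ℝ :=
  xA * cayley g a + xB * cayley g b + cayley g 1

lemma weightedCost_eq (xA xB : ℝ) (a b g : Perm α) :
    weightedCost xA xB a b g = weightedCost xA xB a b 1 + xA * geodesicExcess a g +
      xB * geodesicExcess b g + (1 - xA - xB) * cayley g 1 := by
  simp only [weightedCost, geodesicExcess, cayley_self, cayley_comm a 1, cayley_comm b 1]
  push_cast
  ring

variable [Finite α]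

lemma weightedCost_one_lt {xA xB : ℝ} (hA : 0 ≤ xA) (hB : 0 ≤ xB) (hAB : xA + xB < 1)
    (a b : Perm α) {g : Perm α} (hg : g ≠ 1) :
    weightedCost xA xB a b 1 < weightedCost xA xB a b g := by
  have hexA := mul_nonneg hA (geodesicExcess_nonneg a g)
  have hexB := mul_nonneg hB (geodesicExcess_nonneg b g)
  have hpos : 0 < (1 - xA - xB) * cayley g 1 :=
    mul_pos (by linarith) (by exact_mod_cast cayley_pos hg)
  rw [weightedCost_eq xA xB a b g]
  linarith

lemma weightedCost_one_le_and_eq_iff {xA xB : ℝ} (hA : 0 < xA) (hB : 0 < xB)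
    (hAB : xA + xB = 1) (a b g : Perm α) :
    weightedCost xA xB a b 1 ≤ weightedCost xA xB a b g ∧
      (weightedCost xA xB a b g = weightedCost xA xB a b 1 ↔
        g ∈ geodesic a 1 ∩ geodesic b 1) := by
  have hexA := mul_nonneg hA.le (geodesicExcess_nonneg a g)
  have hexB := mul_nonneg hB.le (geodesicExcess_nonneg b g)
  rw [weightedCost_eq xA xB a b g, show 1 - xA - xB = 0 by linarith, zero_mul, add_zero]
  refine ⟨by linarith, ?_⟩
  rw [add_assoc, add_eq_left, add_eq_zero_iff_of_nonneg hexA hexB, mul_eq_zero, mul_eq_zero,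
    or_iff_right hA.ne', or_iff_right hB.ne', geodesicExcess_eq_zero_iff,
    geodesicExcess_eq_zero_iff, Set.mem_inter_iff]

end WeightedCost

theorem stmt10_general (n m : ℕ) (hn : 1 ≤ n) (hm : 2 ≤ m)
    (gB gA : Equiv.Perm (ZMod (m * n)))
(hgB : ∀ q r : ℕ, r < m →
      gB ((q * m + r : ℕ) : ZMod (m * n)) = ((q * m + (r + 1) % m : ℕ) : ZMod (m * n)))
    (hgA : gA = Equiv.addLeft ((m / 2 : ℕ) : ZMod (m * n)) * gB *
      (Equiv.addLeft ((m / 2 : ℕ) : ZMod (m * n)))⁻¹)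
    (x_A x_B : ℝ) :
    (0 ≤ x_A → 0 ≤ x_B → x_A + x_B < 1 →
      (∀ g : Equiv.Perm (ZMod (m * n)), g ≠ 1 →
        x_A * (cayley (1 : Equiv.Perm (ZMod (m * n))) gA : ℝ) +
            x_B * (cayley (1 : Equiv.Perm (ZMod (m * n))) gB : ℝ) +
            (cayley (1 : Equiv.Perm (ZMod (m * n))) 1 : ℝ) <
          x_A * (cayley g gA : ℝ) + x_B * (cayley g gB : ℝ) + (cayley g 1 : ℝ)) ∧
      x_A * (cayley (1 : Equiv.Perm (ZMod (m * n))) gA : ℝ) +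
          x_B * (cayley (1 : Equiv.Perm (ZMod (m * n))) gB : ℝ) +
          (cayley (1 : Equiv.Perm (ZMod (m * n))) 1 : ℝ) =
        (x_A + x_B) * (n : ℝ) * ((m : ℝ) - 1)) ∧
    (0 < x_A → 0 < x_B → x_A + x_B = 1 →
      ∀ g : Equiv.Perm (ZMod (m * n)),
        ((n : ℝ) * ((m : ℝ) - 1) ≤
          x_A * (cayley g gA : ℝ) + x_B * (cayley g gB : ℝ) + (cayley g 1 : ℝ)) ∧
        (x_A * (cayley g gA : ℝ) + x_B * (cayley g gB : ℝ) + (cayley g 1 : ℝ) =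
            (n : ℝ) * ((m : ℝ) - 1) ↔
          g ∈ geodesic gA 1 ∩ geodesic gB 1)) := by
  have : NeZero (m * n) := ⟨Nat.mul_ne_zero (by omega) (by omega)⟩
  have hcB : cycleCount gB = n := IsBlockRotation.cycleCount_eq hgB
  have hcA : cycleCount gA = n := by rw [hgA, cycleCount_conj, hcB]
  have hdist : ∀ k : Perm (ZMod (m * n)), cycleCount k = n →
      (cayley 1 k : ℝ) = n * (m - 1) := by
    intro k hk
    rw [cayley_one_left, hk, Nat.card_zmod, Nat.cast_sub (Nat.le_mul_of_pos_left n (by omega))]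
    push_cast
    ring
  refine ⟨fun hA hB hAB => ⟨fun g hg => weightedCost_one_lt hA hB hAB gA gB hg, ?_⟩,
    fun hA hB hAB g => ?_⟩
  · rw [hdist gA hcA, hdist gB hcB, cayley_self, Nat.cast_zero, add_zero, ← add_mul, mul_assoc]
  · have hcost : weightedCost x_A x_B gA gB 1 = n * (m - 1) := by
      rw [weightedCost, hdist gA hcA, hdist gB hcB, cayley_self, Nat.cast_zero, add_zero,
        ← add_mul, hAB, one_mul]
    rw [← hcost]
    exact weightedCost_one_le_and_eq_iff hA hB hAB gA gB g

/-- (i) If `x_A + x_B < 1` (with `x_A, x_B ≥ 0`) the identity is the unique minimizer of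
`f`, with `f(e) = (x_A + x_B) n (m-1)`.  (ii) If `x_A + x_B = 1` (with `x_A, x_B > 0`)
then `f(g) ≥ n(m-1)`, with equality exactly when `g ∈ Γ(g_A,e) ∩ Γ(g_B,e)`. -/
theorem stmt10 (n m : ℕ) (hn : 1 ≤ n) (hm : 2 ≤ m) (hme : Even m)
    (gB gA : Equiv.Perm (ZMod (m * n)))
(hgB : ∀ q r : ℕ, r < m →
      gB ((q * m + r : ℕ) : ZMod (m * n)) = ((q * m + (r + 1) % m : ℕ) : ZMod (m * n)))
    (hgA : gA = Equiv.addLeft ((m / 2 : ℕ) : ZMod (m * n)) * gB *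
      (Equiv.addLeft ((m / 2 : ℕ) : ZMod (m * n)))⁻¹)
    (x_A x_B : ℝ) :
    (0 ≤ x_A → 0 ≤ x_B → x_A + x_B < 1 →
      (∀ g : Equiv.Perm (ZMod (m * n)), g ≠ 1 →
        x_A * (cayley (1 : Equiv.Perm (ZMod (m * n))) gA : ℝ) +
            x_B * (cayley (1 : Equiv.Perm (ZMod (m * n))) gB : ℝ) +
            (cayley (1 : Equiv.Perm (ZMod (m * n))) 1 : ℝ) <
          x_A * (cayley g gA : ℝ) + x_B * (cayley g gB : ℝ) + (cayley g 1 : ℝ)) ∧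
      x_A * (cayley (1 : Equiv.Perm (ZMod (m * n))) gA : ℝ) +
          x_B * (cayley (1 : Equiv.Perm (ZMod (m * n))) gB : ℝ) +
          (cayley (1 : Equiv.Perm (ZMod (m * n))) 1 : ℝ) =
        (x_A + x_B) * (n : ℝ) * ((m : ℝ) - 1)) ∧
    (0 < x_A → 0 < x_B → x_A + x_B = 1 →
      ∀ g : Equiv.Perm (ZMod (m * n)),
        ((n : ℝ) * ((m : ℝ) - 1) ≤
          x_A * (cayley g gA : ℝ) + x_B * (cayley g gB : ℝ) + (cayley g 1 : ℝ)) ∧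
        (x_A * (cayley g gA : ℝ) + x_B * (cayley g gB : ℝ) + (cayley g 1 : ℝ) =
            (n : ℝ) * ((m : ℝ) - 1) ↔
          g ∈ geodesic gA 1 ∩ geodesic gB 1)) :=
  stmt10_general n m hn hm gB gA hgB hgA x_A x_B
end

section
/- Fix integers n ≥ 1 and even m ≥ 2, set N = m·n, and let g_A and X be the permutations of ℤ/Nℤ defined in the context. Then for every permutation g of ℤ/Nℤ, the 'pinching' inequality G_X(g) ≤ G_{g_A}(g) holds, where for any g₀ one defines 2·G_{g₀}(g) = d(g₀,g) + d(g,e) − d(g₀,e) − 2(#(g₀) − #⟨g,g₀⟩). Explicitly: d(g,g_A) − d(g,X) + n + 2·#⟨g,g_A⟩ − 2·#⟨g,X⟩ ≥ 0. -/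
/-- The number of orbits of the subgroup generated by two permutations `g, h`. -/
noncomputable def jointOrbitCount {α : Type*} (g h : Equiv.Perm α) : ℕ :=
  Nat.card (MulAction.orbitRel.Quotient (Subgroup.closure ({g, h} : Set (Equiv.Perm α))) α)

/-!
Put `Φ(h) = d(g,h) + 2 #⟨g,h⟩`. Cutting a cycle of `h`, i.e. passing to `h (a b)` with `a, b` in
one cycle of `h`, raises `Φ` by at most one. Indeed `g (h (a b))⁻¹ = (g h⁻¹) (h a, h b)`, so the
cycle count of `g h⁻¹` changes by one, and at most one joint orbit splits; if one does, then `h a`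
and `h b` lie in different orbits of `⟨g, h (a b)⟩`, hence in different cycles of
`g (h (a b))⁻¹`, and `d(g, ·)` drops by one. Both counts are compared through the partition
obtained by gluing the two points, which is the same before and after the cut.

`X` arises from `g_A` by cutting each of its `n` cycles into its two halves, so
`Φ(X) ≤ Φ(g_A) + n`, which is the claim.
-/

open Equiv Equiv.Perm MulAction Subgroup

namespace Setoid

variable {α : Type*}

def glue (r : Setoid α) (a b : α) : Setoid α where
  r x y := r x y ∨ r x a ∧ r y b ∨ r x b ∧ r y a
  iseqv := by
    have hs : ∀ {x y : α}, r x y → r y x := r.symm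
    have ht : ∀ {x y z : α}, r x y → r y z → r x z := r.trans
    exact ⟨fun x => Or.inl (r.refl x), by grind, by grind⟩

variable {r t : Setoid α} {a b : α}

theorem le_glue : r ≤ r.glue a b := fun _ _ h => Or.inl h

theorem glue_rel : r.glue a b a b := Or.inr (Or.inl ⟨r.refl a, r.refl b⟩)

theorem glue_le (hr : r ≤ t) (hab : t a b) : r.glue a b ≤ t := by
  rintro x y (h | ⟨h₁, h₂⟩ | ⟨h₁, h₂⟩)
  · exact hr h
  · exact t.trans (hr h₁) (t.trans hab (t.symm (hr h₂)))
  · exact t.trans (hr h₁) (t.trans (t.symm hab) (t.symm (hr h₂)))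

theorem glue_eq_self (hab : r a b) : r.glue a b = r :=
  le_antisymm (glue_le le_rfl hab) le_glue

theorem rel_swap_apply [DecidableEq α] (hab : t a b) (x : α) : t (swap a b x) x := by
  rcases eq_or_ne x a with rfl | hxa
  · rw [swap_apply_left]
    exact t.symm hab
  rcases eq_or_ne x b with rfl | hxb
  · rw [swap_apply_right]
    exact hab
  · rw [swap_apply_of_ne_of_ne hxa hxb]

variable [Finite α]

theorem card_quotient_glue_add_one (hab : ¬ r a b) :
    Nat.card (Quotient (r.glue a b)) + 1 = Nat.card (Quotient r) := by
  classical
  let f : {q : Quotient r // q ≠ ⟦b⟧} → Quotient (r.glue a b) := fun q => map_of_le le_glue q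
  have hf : Function.Bijective f := by
    constructor
    · rintro ⟨x, hx⟩ ⟨y, hy⟩ hxy
      induction x using Quotient.inductionOn
      induction y using Quotient.inductionOn
      rcases Quotient.exact hxy with h | ⟨-, h⟩ | ⟨h, -⟩
      · exact Subtype.ext (Quotient.sound h)
      · exact absurd (Quotient.sound h) hy
      · exact absurd (Quotient.sound h) hx
    · intro q
      induction q using Quotient.inductionOn with | h x =>
      by_cases hx : r x b
      · exact ⟨⟨⟦a⟧, fun h => hab (Quotient.exact h)⟩,
          Quotient.sound (Or.inr (Or.inl ⟨r.refl a, hx⟩))⟩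
      · exact ⟨⟨⟦x⟧, fun h => hx (Quotient.exact h)⟩, rfl⟩
  rw [← Nat.card_congr (Equiv.ofBijective f hf), ← Finite.card_option,
    Nat.card_congr (optionSubtypeNe _)]

theorem card_quotient_glue_le : Nat.card (Quotient (r.glue a b)) ≤ Nat.card (Quotient r) := by
  by_cases hab : r a b
  · rw [glue_eq_self hab]
  · rw [← card_quotient_glue_add_one hab]
    omega

theorem card_quotient_le_glue_add_one :
    Nat.card (Quotient r) ≤ Nat.card (Quotient (r.glue a b)) + 1 := by
  by_cases hab : r a b
  · rw [glue_eq_self hab]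
    omega
  · rw [card_quotient_glue_add_one hab]

theorem card_quotient_le_add_one_of_glue_eq (h : r.glue a b = t.glue a b) :
    Nat.card (Quotient r) ≤ Nat.card (Quotient t) + 1 :=
  calc Nat.card (Quotient r) ≤ Nat.card (Quotient (r.glue a b)) + 1 :=
        card_quotient_le_glue_add_one
    _ ≤ Nat.card (Quotient t) + 1 := by
        rw [h]
        exact Nat.add_le_add_right card_quotient_glue_le 1

theorem card_quotient_le_of_glue_eq (h : r.glue a b = t.glue a b) (hab : t a b) :
    Nat.card (Quotient t) ≤ Nat.card (Quotient r) := by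
  rw [← glue_eq_self hab, ← h]
  exact card_quotient_glue_le

theorem card_quotient_add_one_of_glue_eq (h : r.glue a b = t.glue a b) (hab : r a b)
    (hab' : ¬ t a b) : Nat.card (Quotient r) + 1 = Nat.card (Quotient t) := by
  rw [← card_quotient_glue_add_one hab', ← h, glue_eq_self hab]

end Setoid

variable {α : Type*}

theorem orbitRel_closure_le {S : Set (Perm α)} {t : Setoid α} (h : ∀ f ∈ S, ∀ x, t (f x) x) :
    orbitRel (closure S) α ≤ t := by
  have key : ∀ f ∈ closure S, ∀ x, t (f x) x := by
    intro f hf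
    induction hf using closure_induction with
    | mem f hf => exact h f hf
    | one => exact t.refl
    | mul f g _ _ hf hg => exact fun x => t.trans (hf (g x)) (hg x)
    | inv f _ hf => exact fun x => t.symm (by simpa using hf (f⁻¹ x))
  rintro x y ⟨⟨f, hf⟩, rfl⟩
  exact key f hf y

theorem orbitRel_apply_self {H : Subgroup (Perm α)} {f : Perm α} (hf : f ∈ H) (x : α) :
    orbitRel H α (f x) x :=
  mem_orbit x (⟨f, hf⟩ : H)

theorem Equiv.Perm.SameCycle.orbitRel_of_mem {H : Subgroup (Perm α)} {σ : Perm α} (hσ : σ ∈ H)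
    {x y : α} (h : σ.SameCycle x y) : orbitRel H α x y := by
  obtain ⟨i, rfl⟩ := h
  exact (MulAction.orbitRel H α).symm (orbitRel_apply_self (zpow_mem hσ i) x)

theorem sameCycle_iff_orbitRel_closure {σ : Perm α} {x y : α} :
    σ.SameCycle x y ↔ orbitRel (closure {σ}) α x y :=
  ⟨fun h => h.orbitRel_of_mem (subset_closure (Set.mem_singleton σ)),
    fun h => orbitRel_closure_le (t := SameCycle.setoid σ)
      (fun _ hf x => by rw [hf]; exact sameCycle_apply_left.2 (.refl _ x)) h⟩

theorem Equiv.Perm.SameCycle.eq_of_forall_apply_eq {β : Type*} {h : Perm α} {f : α → β}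
    (hf : ∀ x, f (h x) = f x) {x y : α} (hxy : h.SameCycle x y) : f x = f y :=
  orbitRel_closure_le (t := Setoid.ker f) (fun _ hσ x => by rw [hσ]; exact hf x)
    (sameCycle_iff_orbitRel_closure.1 hxy)

theorem Equiv.Perm.SameCycle.mul_of_forall_apply_eq [Finite α] {h f : Perm α} {x y : α}
    (hf : ∀ z, h.SameCycle x z → f z = z) (hxy : h.SameCycle x y) : (h * f).SameCycle x y := by
  obtain ⟨j, rfl⟩ := hxy.exists_nat_pow_eq
  have hpow : ∀ i : ℕ, ((h * f) ^ i) x = (h ^ i) x := by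
    intro i
    induction i with
    | zero => rfl
    | succ i ih =>
      rw [pow_succ', mul_apply, ih, pow_succ', mul_apply, mul_apply,
        hf _ (sameCycle_pow_right.2 (SameCycle.refl h x))]
  rw [← hpow]
  exact sameCycle_pow_right.2 (SameCycle.refl _ x)

theorem orbitRel_closure_pair_of_sameCycle {g h : Perm α} {a b : α}
    (hc : (g * h⁻¹).SameCycle (h a) (h b)) : orbitRel (closure {g, h}) α a b := by
  set J := orbitRel (closure {g, h}) α
  have hg : g ∈ closure {g, h} := subset_closure (Set.mem_insert g _)
  have hh : h ∈ closure {g, h} := subset_closure (Set.mem_insert_of_mem g (Set.mem_singleton h))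
  exact J.trans' (J.symm' (orbitRel_apply_self hh a))
    (J.trans' (hc.orbitRel_of_mem (mul_mem hg (inv_mem hh))) (orbitRel_apply_self hh b))

theorem cycleCount_eq_card_orbitRel (σ : Perm α) :
    cycleCount σ = Nat.card (orbitRel.Quotient (closure {σ}) α) := by
  have : SameCycle.setoid σ = orbitRel (closure {σ}) α :=
    Setoid.ext fun _ _ => sameCycle_iff_orbitRel_closure
  change Nat.card (Quotient (SameCycle.setoid σ)) = _
  rw [this]

theorem cycleCount_le_card [Finite α] (σ : Perm α) : cycleCount σ ≤ Nat.card α :=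
  Nat.card_le_card_of_surjective _ Quotient.mk_surjective

theorem natCast_cayley [Finite α] (g h : Perm α) :
    (cayley g h : ℤ) = Nat.card α - cycleCount (g * h⁻¹) := by
  rw [cayley, Nat.cast_sub (cycleCount_le_card _)]

section Transpositions

variable [DecidableEq α]

theorem orbitRel_closure_insert_le_glue (h : Perm α) (S : Set (Perm α)) (a b : α) :
    orbitRel (closure (insert h S)) α ≤
      (orbitRel (closure (insert (h * swap a b) S)) α).glue a b := by
  refine orbitRel_closure_le ?_
  rintro f (rfl | hf) x
  · have hfx : f x = (f * swap a b) (swap a b x) := by simp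
    rw [hfx]
    exact Setoid.trans' _
      (Setoid.le_glue (orbitRel_apply_self (subset_closure (Set.mem_insert _ _)) _))
      (Setoid.rel_swap_apply Setoid.glue_rel x)
  · exact Setoid.le_glue (orbitRel_apply_self (subset_closure (Set.mem_insert_of_mem _ hf)) x)

theorem glue_orbitRel_closure_insert_mul_swap (h : Perm α) (S : Set (Perm α)) (a b : α) :
    (orbitRel (closure (insert h S)) α).glue a b =
      (orbitRel (closure (insert (h * swap a b) S)) α).glue a b := by
  refine le_antisymm (Setoid.glue_le (orbitRel_closure_insert_le_glue h S a b) Setoid.glue_rel)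
    (Setoid.glue_le ?_ Setoid.glue_rel)
  have := orbitRel_closure_insert_le_glue (h * swap a b) S a b
  rwa [mul_swap_mul_self] at this

theorem glue_orbitRel_closure_singleton_mul_swap (π : Perm α) (u v : α) :
    (orbitRel (closure {π}) α).glue u v = (orbitRel (closure {π * swap u v}) α).glue u v := by
  have := glue_orbitRel_closure_insert_mul_swap π ∅ u v
  rwa [insert_empty_eq, insert_empty_eq] at this

theorem glue_orbitRel_closure_pair_mul_swap (g h : Perm α) (a b : α) :
    (orbitRel (closure {g, h}) α).glue a b =
      (orbitRel (closure {g, h * swap a b}) α).glue a b := by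
  have := glue_orbitRel_closure_insert_mul_swap h {g} a b
  rwa [Set.pair_comm h, Set.pair_comm (h * swap a b)] at this

def swapProduct (a b : ℕ → α) (k : ℕ) : Perm α :=
  ((List.range k).map fun i => swap (a i) (b i)).prod

theorem swapProduct_succ (a b : ℕ → α) (k : ℕ) :
    swapProduct a b (k + 1) = swapProduct a b k * swap (a k) (b k) :=
  List.prod_range_succ _ k

theorem swapProduct_apply {a b : ℕ → α} {k : ℕ} (β : α → ℕ) (ha : ∀ i < k, β (a i) = i)
    (hb : ∀ i < k, β (b i) = i) (x : α) :
    swapProduct a b k x = if β x < k then swap (a (β x)) (b (β x)) x else x := by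
  induction k generalizing x with
  | zero => simp [swapProduct]
  | succ k ih =>
    have ih := ih (fun i hi => ha i (by omega)) (fun i hi => hb i (by omega))
    rw [swapProduct_succ, mul_apply]
    by_cases hxk : β x = k
    · have hy : β (swap (a k) (b k) x) = k := by
        rcases eq_or_ne x (a k) with rfl | hxa
        · rw [swap_apply_left, hb k (by omega)]
        rcases eq_or_ne x (b k) with rfl | hxb
        · rw [swap_apply_right, ha k (by omega)]
        · rwa [swap_apply_of_ne_of_ne hxa hxb]
      rw [ih, hy, if_neg (lt_irrefl k), if_pos (by omega), hxk]
    · have hxa : x ≠ a k := fun h => hxk (h ▸ ha k (by omega))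
      have hxb : x ≠ b k := fun h => hxk (h ▸ hb k (by omega))
      rw [swap_apply_of_ne_of_ne hxa hxb, ih]
      simp only [show β x < k + 1 ↔ β x < k by omega]

variable [Finite α]

theorem sameCycle_mul_swap_of_not_sameCycle {π : Perm α} {u v : α}
    (huv : ¬ π.SameCycle u v) : (π * swap u v).SameCycle u v := by
  set π' := π * swap u v
  have hbase : π'.SameCycle v (π u) := ⟨1, by simp [π']⟩
  -- starting from `v`, `π'` runs through the `π`-cycle of `u`, which avoids `v`
  have hstep : ∀ j : ℕ, π'.SameCycle v ((π ^ (j + 1)) u) := by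
    intro j
    induction j with
    | zero => simpa using hbase
    | succ j ih =>
      rw [pow_succ', mul_apply]
      by_cases hj : (π ^ (j + 1)) u = u
      · rwa [hj]
      · have hv : (π ^ (j + 1)) u ≠ v :=
          fun h => huv ⟨((j + 1 : ℕ) : ℤ), by rw [zpow_natCast]; exact h⟩
        have hπ' : π ((π ^ (j + 1)) u) = π' ((π ^ (j + 1)) u) := by
          simp [π', swap_apply_of_ne_of_ne hj hv]
        rw [hπ']
        exact sameCycle_apply_right.2 ih
  have := hstep (orderOf π - 1)
  rw [Nat.sub_add_cancel (orderOf_pos π), pow_orderOf_eq_one] at this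
  exact this.symm

theorem cycleCount_le_cycleCount_mul_swap_add_one (π : Perm α) (u v : α) :
    cycleCount π ≤ cycleCount (π * swap u v) + 1 := by
  rw [cycleCount_eq_card_orbitRel, cycleCount_eq_card_orbitRel]
  exact Setoid.card_quotient_le_add_one_of_glue_eq (glue_orbitRel_closure_singleton_mul_swap π u v)

theorem cycleCount_mul_swap_eq_add_one {π : Perm α} {u v : α}
    (huv : ¬ (π * swap u v).SameCycle u v) : cycleCount (π * swap u v) = cycleCount π + 1 := by
  have hπ : π.SameCycle u v := by
    simpa only [mul_swap_mul_self] using sameCycle_mul_swap_of_not_sameCycle huv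
  rw [cycleCount_eq_card_orbitRel, cycleCount_eq_card_orbitRel]
  exact (Setoid.card_quotient_add_one_of_glue_eq (glue_orbitRel_closure_singleton_mul_swap π u v)
    (sameCycle_iff_orbitRel_closure.1 hπ) (mt sameCycle_iff_orbitRel_closure.2 huv)).symm

theorem jointOrbitCount_mul_swap_le {g h : Perm α} {a b : α}
    (hab : orbitRel (closure {g, h * swap a b}) α a b) :
    jointOrbitCount g (h * swap a b) ≤ jointOrbitCount g h :=
  Setoid.card_quotient_le_of_glue_eq (glue_orbitRel_closure_pair_mul_swap g h a b) hab

theorem jointOrbitCount_mul_swap_eq_add_one {g h : Perm α} {a b : α} (hab : h.SameCycle a b)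
    (hab' : ¬ orbitRel (closure {g, h * swap a b}) α a b) :
    jointOrbitCount g (h * swap a b) = jointOrbitCount g h + 1 :=
  (Setoid.card_quotient_add_one_of_glue_eq (glue_orbitRel_closure_pair_mul_swap g h a b)
    (hab.orbitRel_of_mem (subset_closure (Set.mem_insert_of_mem g (Set.mem_singleton h))))
    hab').symm

theorem cayley_mul_swap_add_jointOrbitCount_le (g h : Perm α) {a b : α}
    (hab : h.SameCycle a b) :
    (cayley g (h * swap a b) : ℤ) + 2 * jointOrbitCount g (h * swap a b) ≤
      cayley g h + 2 * jointOrbitCount g h + 1 := by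
  have hσ : g * (h * swap a b)⁻¹ = g * h⁻¹ * swap (h a) (h b) := by
    simp [swap_apply_apply, mul_assoc]
  rw [natCast_cayley, natCast_cayley, hσ]
  by_cases hab' : orbitRel (closure {g, h * swap a b}) α a b
  · have := jointOrbitCount_mul_swap_le hab'
    have := cycleCount_le_cycleCount_mul_swap_add_one (g * h⁻¹) (h a) (h b)
    omega
  · have hcyc : ¬ (g * h⁻¹ * swap (h a) (h b)).SameCycle (h a) (h b) := by
      rw [← hσ]
      intro hc
      refine hab' (Setoid.symm' _ (orbitRel_closure_pair_of_sameCycle ?_))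
      rwa [mul_apply, mul_apply, swap_apply_left, swap_apply_right]
    have := jointOrbitCount_mul_swap_eq_add_one hab hab'
    have := cycleCount_mul_swap_eq_add_one hcyc
    omega

theorem cayley_mul_swapProduct_add_jointOrbitCount_le (g h : Perm α) {a b : ℕ → α} {k : ℕ}
    (β : α → ℕ) (hβ : ∀ x, β (h x) = β x) (ha : ∀ i < k, β (a i) = i)
    (hb : ∀ i < k, β (b i) = i) (hab : ∀ i < k, h.SameCycle (a i) (b i)) :
    (cayley g (h * swapProduct a b k) : ℤ) + 2 * jointOrbitCount g (h * swapProduct a b k) ≤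
      cayley g h + 2 * jointOrbitCount g h + k := by
  induction k with
  | zero => simp [swapProduct]
  | succ k ih =>
    have ih := ih (fun i hi => ha i (by omega)) (fun i hi => hb i (by omega))
      (fun i hi => hab i (by omega))
    have hcycle : (h * swapProduct a b k).SameCycle (a k) (b k) := by
      refine (hab k (by omega)).mul_of_forall_apply_eq fun z hz => ?_
      have hz : β z = k := (hz.eq_of_forall_apply_eq hβ).symm.trans (ha k (by omega))
      rw [swapProduct_apply β (fun i hi => ha i (by omega)) (fun i hi => hb i (by omega)), hz,
        if_neg (lt_irrefl k)]
    have hstep := cayley_mul_swap_add_jointOrbitCount_le g _ hcycle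
    rw [swapProduct_succ, ← mul_assoc]
    push_cast
    linarith

end Transpositions

section Blocks

variable {m n c : ℕ}

/-- With `c = m / 2`, the `r`-th point of the `q`-th cycle of `g_A = t g_B t⁻¹`. -/
def blockPoint (m n c q r : ℕ) : ZMod (m * n) := ((q * m + r : ℕ) : ZMod (m * n)) + c

def blockIndex (m n c : ℕ) (x : ZMod (m * n)) : ℕ := (x - c).val / m

theorem pow_apply_blockPoint {gA : Perm (ZMod (m * n))}
    (hA : ∀ q r, r < m → gA (blockPoint m n c q r) = blockPoint m n c q ((r + 1) % m))
    (q : ℕ) {r j : ℕ} (hrj : r + j < m) :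
    (gA ^ j) (blockPoint m n c q r) = blockPoint m n c q (r + j) := by
  induction j with
  | zero => rfl
  | succ j ih =>
    rw [pow_succ', mul_apply, ih (by omega), hA q _ (by omega),
      Nat.mod_eq_of_lt (by omega : r + j + 1 < m), add_assoc]

theorem val_natCast_mul_add {q r : ℕ} (hq : q < n) (hr : r < m) :
    ((q * m + r : ℕ) : ZMod (m * n)).val = q * m + r :=
  ZMod.val_cast_of_lt (by nlinarith)

theorem blockPoint_injective {q r r' : ℕ} (hq : q < n) (hr : r < m) (hr' : r' < m)
    (h : blockPoint m n c q r = blockPoint m n c q r') : r = r' := by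
  have := congrArg ZMod.val (add_right_cancel h)
  rw [val_natCast_mul_add hq hr, val_natCast_mul_add hq hr'] at this
  omega

theorem blockIndex_blockPoint {q r : ℕ} (hq : q < n) (hr : r < m) :
    blockIndex m n c (blockPoint m n c q r) = q := by
  rw [blockIndex, blockPoint, add_sub_cancel_right, val_natCast_mul_add hq hr,
    Nat.mul_comm, Nat.mul_add_div (by omega), Nat.div_eq_of_lt hr, add_zero]

theorem exists_eq_blockPoint [NeZero (m * n)] (x : ZMod (m * n)) :
    ∃ q < n, ∃ r < m, x = blockPoint m n c q r := by
  have hm : 0 < m := Nat.pos_of_ne_zero (left_ne_zero_of_mul (NeZero.ne (m * n)))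
  refine ⟨(x - c).val / m, ?_, (x - c).val % m, Nat.mod_lt _ hm, ?_⟩
  · rw [Nat.div_lt_iff_lt_mul hm]
    exact (ZMod.val_lt _).trans_eq (Nat.mul_comm m n)
  · rw [blockPoint, Nat.div_add_mod', ZMod.natCast_zmod_val, sub_add_cancel]

theorem blockIndex_apply [NeZero (m * n)] {gA : Perm (ZMod (m * n))}
    (hA : ∀ q r, r < m → gA (blockPoint m n c q r) = blockPoint m n c q ((r + 1) % m))
    (x : ZMod (m * n)) : blockIndex m n c (gA x) = blockIndex m n c x := by
  obtain ⟨q, hq, r, hr, rfl⟩ := exists_eq_blockPoint (c := c) x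
  rw [hA q r hr, blockIndex_blockPoint hq hr, blockIndex_blockPoint hq (Nat.mod_lt _ (by omega))]

theorem conj_apply_blockPoint {gB gA : Perm (ZMod (m * n))}
    (hgB : ∀ q r : ℕ, r < m →
      gB ((q * m + r : ℕ) : ZMod (m * n)) = ((q * m + (r + 1) % m : ℕ) : ZMod (m * n)))
    (hgA : gA = Equiv.addLeft ((c : ℕ) : ZMod (m * n)) * gB *
      (Equiv.addLeft ((c : ℕ) : ZMod (m * n)))⁻¹)
    (q r : ℕ) (hr : r < m) :
    gA (blockPoint m n c q r) = blockPoint m n c q ((r + 1) % m) := by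
  have hshift : ∀ y, gA (y + c) = gB y + c := fun y => by simp [hgA, add_comm]
  rw [blockPoint, hshift, hgB q r hr, blockPoint]

theorem blockPoint_eq_natCast (hc : m = 2 * c) (q r : ℕ) :
    blockPoint m n c q r = (((2 * q + 1) * c + r : ℕ) : ZMod (m * n)) := by
  subst hc
  push_cast [blockPoint]
  ring

variable {X : Perm (ZMod (m * n))}

theorem apply_blockPoint_of_lt (hc : m = 2 * c)
    (hX : ∀ q r : ℕ, r < c →
      X ((q * c + r : ℕ) : ZMod (m * n)) = ((q * c + (r + 1) % c : ℕ) : ZMod (m * n)))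
    {q r : ℕ} (hr : r < c) :
    X (blockPoint m n c q r) = blockPoint m n c q ((r + 1) % c) := by
  rw [blockPoint_eq_natCast hc, hX _ _ hr, blockPoint_eq_natCast hc]

theorem apply_blockPoint_add (hc : m = 2 * c)
    (hX : ∀ q r : ℕ, r < c →
      X ((q * c + r : ℕ) : ZMod (m * n)) = ((q * c + (r + 1) % c : ℕ) : ZMod (m * n)))
    {q r : ℕ} (hr : r < c) :
    X (blockPoint m n c q (c + r)) = blockPoint m n c q (c + (r + 1) % c) := by
  have h : ∀ s, (2 * q + 1) * c + (c + s) = (2 * q + 2) * c + s := fun s => by ring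
  rw [blockPoint_eq_natCast hc, blockPoint_eq_natCast hc, h, h, hX _ _ hr]

theorem eq_mul_swapProduct [NeZero (m * n)] (hc : m = 2 * c) (hc0 : 0 < c)
    {gA : Perm (ZMod (m * n))}
    (hA : ∀ q r, r < m → gA (blockPoint m n c q r) = blockPoint m n c q ((r + 1) % m))
    (hX : ∀ q r : ℕ, r < c →
      X ((q * c + r : ℕ) : ZMod (m * n)) = ((q * c + (r + 1) % c : ℕ) : ZMod (m * n))) :
    X = gA * swapProduct (fun q => blockPoint m n c q (c - 1))
      (fun q => blockPoint m n c q (m - 1)) n := by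
  ext x : 1
  obtain ⟨q, hq, r, hr, rfl⟩ := exists_eq_blockPoint (c := c) x
  rw [mul_apply, swapProduct_apply (blockIndex m n c)
    (fun i hi => blockIndex_blockPoint hi (by omega))
    (fun i hi => blockIndex_blockPoint hi (by omega)), blockIndex_blockPoint hq hr, if_pos hq]
  have hne : ∀ r', r' < m → r' ≠ r → blockPoint m n c q r ≠ blockPoint m n c q r' :=
    fun r' hr' hne h => hne (blockPoint_injective hq hr hr' h).symm
  rcases lt_or_ge r c with hrc | hrc
  · rw [apply_blockPoint_of_lt hc hX hrc]
    rcases eq_or_ne r (c - 1) with rfl | hr'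
    · rw [swap_apply_left, hA _ _ (by omega), Nat.sub_add_cancel hc0,
        Nat.sub_add_cancel (by omega), Nat.mod_self, Nat.mod_self]
    · rw [swap_apply_of_ne_of_ne (hne _ (by omega) (Ne.symm hr')) (hne _ (by omega) (by omega)),
        hA q r hr, Nat.mod_eq_of_lt (by omega), Nat.mod_eq_of_lt (by omega)]
  · obtain ⟨s, rfl⟩ : ∃ s, r = c + s := ⟨r - c, by omega⟩
    rw [apply_blockPoint_add hc hX (by omega : s < c)]
    rcases eq_or_ne s (c - 1) with rfl | hs
    · rw [show c + (c - 1) = m - 1 by omega, swap_apply_right, hA _ _ (by omega),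
        Nat.sub_add_cancel hc0, Nat.mod_self, Nat.mod_eq_of_lt (by omega), add_zero]
    · rw [swap_apply_of_ne_of_ne (hne _ (by omega) (by omega)) (hne _ (by omega) (by omega)),
        hA q _ hr, Nat.mod_eq_of_lt (by omega), Nat.mod_eq_of_lt (by omega), add_assoc]

end Blocks

/-- The pinching inequality `G_X(g) ≤ G_{g_A}(g)`, explicitly:
`d(g,g_A) - d(g,X) + n + 2 #⟨g,g_A⟩ - 2 #⟨g,X⟩ ≥ 0`. -/
theorem stmt18 (n m : ℕ) (hn : 1 ≤ n) (hm : 2 ≤ m) (hme : Even m)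
    (gB gA X : Equiv.Perm (ZMod (m * n)))
(hgB : ∀ q r : ℕ, r < m →
      gB ((q * m + r : ℕ) : ZMod (m * n)) = ((q * m + (r + 1) % m : ℕ) : ZMod (m * n)))
    (hgA : gA = Equiv.addLeft ((m / 2 : ℕ) : ZMod (m * n)) * gB *
      (Equiv.addLeft ((m / 2 : ℕ) : ZMod (m * n)))⁻¹)
(hX : ∀ q r : ℕ, r < m / 2 →
      X ((q * (m / 2) + r : ℕ) : ZMod (m * n)) =
        ((q * (m / 2) + (r + 1) % (m / 2) : ℕ) : ZMod (m * n)))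
    :
    ∀ g : Equiv.Perm (ZMod (m * n)),
      (0 : ℤ) ≤ (cayley g gA : ℤ) - (cayley g X : ℤ) + (n : ℤ) +
        2 * (jointOrbitCount g gA : ℤ) - 2 * (jointOrbitCount g X : ℤ) := by
  intro g
  have : NeZero (m * n) := ⟨Nat.mul_ne_zero (by omega) (by omega)⟩
  have hc : m = 2 * (m / 2) := (Nat.two_mul_div_two_of_even hme).symm
  have hA := conj_apply_blockPoint (n := n) hgB hgA
  have hcut : (cayley g X : ℤ) + 2 * jointOrbitCount g X ≤
      cayley g gA + 2 * jointOrbitCount g gA + n := by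
    rw [eq_mul_swapProduct hc (by omega) hA hX]
    refine cayley_mul_swapProduct_add_jointOrbitCount_le g gA (blockIndex m n (m / 2))
      (blockIndex_apply hA) (fun i hi => blockIndex_blockPoint hi (by omega))
      (fun i hi => blockIndex_blockPoint hi (by omega)) fun i _ => ⟨(m / 2 : ℕ), ?_⟩
    rw [zpow_natCast, pow_apply_blockPoint hA i (by omega)]
    congr 1
    omega
  linarith
end
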